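/- Let 𝕜 be a commutative ring, k ≥ 2, and R = 𝕜[x_1,…,x_k]/(x_1x_2⋯x_k). For every 1 ≤ i ≤ k−1: (a) multiplication by x_{[i+1,k]} = x_{i+1}x_{i+2}⋯x_k on the R-module R/(x_{[1,i]}) is injective (i.e. x_{[i+1,k]} is a non-zero-divisor on R/(x_1⋯x_i)); and (b) the cokernel of this multiplication map, namely R/((x_{[1,i]}) + (x_{[i+1,k]})), is free as a 𝕜-module. -/

import Mathlib

/-!
Both `x_{[1,i]}` and `x_{[i+1,k]}` are images of monomials `p`, `q` in disjoint sets of variables,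
and the defining relation `x_1 ⋯ x_k` lies in `(p)`. Hence `R/(x_{[1,i]}) = 𝕜[x]/(p)`, on which
multiplication by `q` is injective because `p` and `q` share no variable, and the cokernel is
`𝕜[x]/(p, q)`: a quotient by a monomial ideal, free over `𝕜` on the monomials outside the ideal.
-/

open MvPolynomial

/-- The ring `R = 𝕜[x₁,…,x_k]/(x₁x₂⋯x_k)`, with variables indexed by `Fin k`
(the variable `x_m` of the paper, `1 ≤ m ≤ k`, corresponds to the index
`m - 1 : Fin k`). -/
abbrev NodalRing (𝕜 : Type*) [CommRing 𝕜] (k : ℕ) : Type _ :=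
  MvPolynomial (Fin k) 𝕜 ⧸
    Ideal.span {∏ i : Fin k, (X i : MvPolynomial (Fin k) 𝕜)}

/-- `x_{[a,b]}`: the image in `R` of the monomial `∏_{a ≤ m ≤ b} x_m`
(an empty product is `1`). -/
noncomputable def xIcc (𝕜 : Type*) [CommRing 𝕜] (k a b : ℕ) : NodalRing 𝕜 k :=
  Ideal.Quotient.mk _
    (∏ t ∈ Finset.univ.filter (fun t : Fin k => a ≤ (t : ℕ) + 1 ∧ (t : ℕ) + 1 ≤ b),
      X t)


namespace MvPolynomial

variable {σ R : Type*} [CommRing R]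

theorem prod_X_eq_monomial_indicator (S : Finset σ) :
    ∏ t ∈ S, (X t : MvPolynomial σ R) = monomial (Finsupp.indicator S fun _ _ => 1) 1 := by
  simpa using prod_X_pow (R := R) (fun _ => 1) S

theorem restrictScalars_ideal_span_monomial_image (D : Set (σ →₀ ℕ)) :
    (Ideal.span ((monomial · (1 : R)) '' D)).restrictScalars R =
      restrictSupport R {e | ∃ d ∈ D, d ≤ e} := by
  ext f
  rw [Submodule.restrictScalars_mem, mem_ideal_span_monomial_image, mem_restrictSupport_iff]
  rfl

theorem isCompl_restrictSupport_compl (s : Set (σ →₀ ℕ)) :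
    IsCompl (restrictSupport R s) (restrictSupport R sᶜ) := by
  have h : IsCompl (Finsupp.supported R R s) (Finsupp.supported R R sᶜ) :=
    ⟨Finsupp.disjoint_supported_supported disjoint_compl_right, by
      rw [codisjoint_iff, ← Finsupp.supported_union, Set.union_compl_self,
        Finsupp.supported_univ]⟩
  exact (Submodule.orderIsoMapComap (AddMonoidAlgebra.coeffLinearEquiv R)).symm.isCompl h

instance free_quotient_ideal_span_monomial_image (D : Set (σ →₀ ℕ)) :
    Module.Free R (MvPolynomial σ R ⧸ Ideal.span ((monomial · (1 : R)) '' D)) := by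
  let s := {e | ∃ d ∈ D, d ≤ e}
  refine Module.Free.of_basis ((basisRestrictSupport R sᶜ).map ?_)
  exact ((Submodule.quotientEquivOfIsCompl _ _ (isCompl_restrictSupport_compl s)).symm.trans
    (Submodule.quotEquivOfEq _ _ (restrictScalars_ideal_span_monomial_image D).symm)).trans
    (Submodule.Quotient.restrictScalarsEquiv R _)

theorem mem_span_monomial_of_monomial_mul_mem {c d : σ →₀ ℕ}
    (hcd : Disjoint c.support d.support) {g : MvPolynomial σ R}
    (h : monomial c 1 * g ∈ Ideal.span {monomial d (1 : R)}) :
    g ∈ Ideal.span {monomial d (1 : R)} := by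
  rw [← Set.image_singleton (f := (monomial · (1 : R))), mem_ideal_span_monomial_image] at h ⊢
  intro e he
  obtain ⟨d, rfl, hd⟩ := h (c + e) (by
    rwa [mem_support_iff, coeff_monomial_mul, one_mul, ← mem_support_iff])
  refine ⟨d, rfl, fun s => ?_⟩
  by_cases hs : s ∈ d.support
  · have hcs : c s = 0 := Finsupp.notMem_support_iff.1 (Finset.disjoint_right.1 hcd hs)
    simpa [hcs] using hd s
  · simp [Finsupp.notMem_support_iff.1 hs]

end MvPolynomial

section QuotientRing

variable {A : Type*} [CommRing A]

theorem injective_lsmul_quotient_span_singleton {I : Ideal A} {p q : A}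
    (hI : I ≤ Ideal.span {p}) (hq : ∀ g, q * g ∈ Ideal.span {p} → g ∈ Ideal.span {p}) :
    Function.Injective (LinearMap.lsmul (A ⧸ I) ((A ⧸ I) ⧸ Ideal.span {Ideal.Quotient.mk I p})
      (Ideal.Quotient.mk I q)) := by
  have hspan :
      Ideal.span {Ideal.Quotient.mk I p} = (Ideal.span {p}).map (Ideal.Quotient.mk I) := by
    rw [Ideal.map_span, Set.image_singleton]
  rw [← LinearMap.ker_eq_bot, LinearMap.ker_eq_bot']
  intro x hx
  obtain ⟨x, rfl⟩ := Ideal.Quotient.mk_surjective x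
  obtain ⟨g, rfl⟩ := Ideal.Quotient.mk_surjective x
  change Ideal.Quotient.mk _ (Ideal.Quotient.mk I (q * g)) = 0 at hx
  rw [Ideal.Quotient.eq_zero_iff_mem, hspan, Ideal.mem_quotient_iff_mem_sup,
    sup_eq_left.2 hI] at hx
  rw [Ideal.Quotient.eq_zero_iff_mem, hspan]
  exact Ideal.mem_map_of_mem _ (hq g hx)

theorem range_lsmul_quotient (I : Ideal A) (b : A) :
    LinearMap.range (LinearMap.lsmul A (A ⧸ I) b) = Submodule.map I.mkQ (Ideal.span {b}) := by
  rw [← (LinearMap.exact_lsmul_mkQ_smul_top (A ⧸ I) b).linearMap_ker_eq, Submodule.ker_mkQ,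
    ← Submodule.ideal_span_singleton_smul, ← Submodule.range_mkQ, LinearMap.range_eq_map,
    ← Submodule.map_smul'', Ideal.smul_eq_mul, Ideal.mul_top]

noncomputable def quotientRangeLsmulEquiv (I : Ideal A) (b : A) :
    ((A ⧸ I) ⧸ LinearMap.range (LinearMap.lsmul A (A ⧸ I) b)) ≃ₗ[A] A ⧸ (I ⊔ Ideal.span {b}) :=
  (Submodule.quotEquivOfEq _ _ (range_lsmul_quotient I b)).trans
    (Submodule.quotientQuotientEquivQuotientSup I _)

theorem Module.Free.quotient_map_mk_of_le (R : Type*) [CommRing R] [Algebra R A]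
    {I J : Ideal A} (h : I ≤ J) [Module.Free R (A ⧸ J)] :
    Module.Free R ((A ⧸ I) ⧸ J.map (Ideal.Quotient.mk I)) :=
  Module.Free.of_equiv (DoubleQuot.quotQuotEquivQuotOfLEₐ R h).symm.toLinearEquiv

end QuotientRing

theorem disjoint_filter_Icc {k a b c d : ℕ} (hbc : b < c) :
    Disjoint (Finset.univ.filter fun t : Fin k => a ≤ (t : ℕ) + 1 ∧ (t : ℕ) + 1 ≤ b)
      (Finset.univ.filter fun t : Fin k => c ≤ (t : ℕ) + 1 ∧ (t : ℕ) + 1 ≤ d) := by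
  rw [Finset.disjoint_filter]
  omega

theorem stmt_11_general (𝕜 : Type*) [CommRing 𝕜] (k : ℕ) (i : ℕ) :
    Function.Injective
      (LinearMap.lsmul (NodalRing 𝕜 k)
        (NodalRing 𝕜 k ⧸ Ideal.span {xIcc 𝕜 k 1 i}) (xIcc 𝕜 k (i + 1) k)) ∧
    Nonempty
      (((NodalRing 𝕜 k ⧸ Ideal.span {xIcc 𝕜 k 1 i}) ⧸
          LinearMap.range
            (LinearMap.lsmul (NodalRing 𝕜 k)
              (NodalRing 𝕜 k ⧸ Ideal.span {xIcc 𝕜 k 1 i}) (xIcc 𝕜 k (i + 1) k)))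
        ≃ₗ[NodalRing 𝕜 k]
        (NodalRing 𝕜 k ⧸
          (Ideal.span {xIcc 𝕜 k 1 i} ⊔ Ideal.span {xIcc 𝕜 k (i + 1) k}))) ∧
    Module.Free 𝕜
      (NodalRing 𝕜 k ⧸
        (Ideal.span {xIcc 𝕜 k 1 i} ⊔ Ideal.span {xIcc 𝕜 k (i + 1) k})) := by
  set SA := Finset.univ.filter fun t : Fin k => 1 ≤ (t : ℕ) + 1 ∧ (t : ℕ) + 1 ≤ i
  set SB := Finset.univ.filter fun t : Fin k => i + 1 ≤ (t : ℕ) + 1 ∧ (t : ℕ) + 1 ≤ k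
  set dA : Fin k →₀ ℕ := Finsupp.indicator SA fun _ _ => 1
  set dB : Fin k →₀ ℕ := Finsupp.indicator SB fun _ _ => 1
  have hprodA : ∏ t ∈ SA, X t = (monomial dA 1 : MvPolynomial (Fin k) 𝕜) :=
    prod_X_eq_monomial_indicator SA
  have hprodB : ∏ t ∈ SB, X t = (monomial dB 1 : MvPolynomial (Fin k) 𝕜) :=
    prod_X_eq_monomial_indicator SB
  have hxA : xIcc 𝕜 k 1 i = Ideal.Quotient.mk _ (monomial dA 1) := congrArg _ hprodA
  have hxB : xIcc 𝕜 k (i + 1) k = Ideal.Quotient.mk _ (monomial dB 1) := congrArg _ hprodB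
  have hle : Ideal.span {∏ t : Fin k, (X t : MvPolynomial (Fin k) 𝕜)} ≤
      Ideal.span {monomial dA 1} :=
    Ideal.span_singleton_le_span_singleton.2
      (hprodA ▸ Finset.prod_dvd_prod_of_subset _ _ _ (Finset.subset_univ _))
  have hdisj : Disjoint dB.support dA.support :=
    ((disjoint_filter_Icc (Nat.lt_succ_self i)).mono (Finsupp.support_indicator_subset _ _)
      (Finsupp.support_indicator_subset _ _)).symm
  refine ⟨?_, ⟨quotientRangeLsmulEquiv _ _⟩, ?_⟩
  · rw [hxA, hxB]
    exact injective_lsmul_quotient_span_singleton hle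
      fun g => mem_span_monomial_of_monomial_mul_mem hdisj
  · have hspan : Ideal.span {xIcc 𝕜 k 1 i} ⊔ Ideal.span {xIcc 𝕜 k (i + 1) k} =
        (Ideal.span ((monomial · (1 : 𝕜)) '' {dA, dB})).map (Ideal.Quotient.mk _) := by
      rw [Set.image_pair, Ideal.map_span, Set.image_pair, hxA, hxB, Ideal.span_insert]
    rw [hspan]
    exact Module.Free.quotient_map_mk_of_le 𝕜
      (hle.trans (Ideal.span_mono (Set.singleton_subset_iff.2 ⟨dA, by simp, rfl⟩)))

/-- **Regularity of `x_{[i+1,k]}` on `R/(x_{[1,i]})` and freeness of the quotient.**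
For `1 ≤ i ≤ k-1`: multiplication by `x_{[i+1,k]}` on `R/(x_{[1,i]})` is injective,
its cokernel is `R/((x_{[1,i]}) + (x_{[i+1,k]}))`, and the latter is free as a
`𝕜`-module. -/
theorem stmt_11 (𝕜 : Type*) [CommRing 𝕜] (k : ℕ) (hk : 2 ≤ k)
    (i : ℕ) (hi : 1 ≤ i) (hik : i ≤ k - 1) :
    Function.Injective
      (LinearMap.lsmul (NodalRing 𝕜 k)
        (NodalRing 𝕜 k ⧸ Ideal.span {xIcc 𝕜 k 1 i}) (xIcc 𝕜 k (i + 1) k)) ∧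
    Nonempty
      (((NodalRing 𝕜 k ⧸ Ideal.span {xIcc 𝕜 k 1 i}) ⧸
          LinearMap.range
            (LinearMap.lsmul (NodalRing 𝕜 k)
              (NodalRing 𝕜 k ⧸ Ideal.span {xIcc 𝕜 k 1 i}) (xIcc 𝕜 k (i + 1) k)))
        ≃ₗ[NodalRing 𝕜 k]
        (NodalRing 𝕜 k ⧸
          (Ideal.span {xIcc 𝕜 k 1 i} ⊔ Ideal.span {xIcc 𝕜 k (i + 1) k}))) ∧
    Module.Free 𝕜
      (NodalRing 𝕜 k ⧸
        (Ideal.span {xIcc 𝕜 k 1 i} ⊔ Ideal.span {xIcc 𝕜 k (i + 1) k})) :=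
  stmt_11_general 𝕜 k i
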